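/- The expected number of random elements needed to generate the direct product of a cyclic group of order 2 with the dihedral group of order 8 is e((ℤ/2ℤ) × D₈) = 94/21. -/

import Mathlib

/-- The probability that `k` uniformly random elements of `G` generate `G`. -/
noncomputable def genProb (G : Type*) [Group G] (k : ℕ) : ℝ :=
  (Nat.card {v : Fin k → G // Subgroup.closure (Set.range v) = ⊤} : ℝ) /
    (Nat.card G : ℝ) ^ k

/-- `egen G = ∑_{k ≥ 0} (1 - P_G(k))`, the expected number of random elements needed to
generate `G`. -/
noncomputable def egen (G : Type*) [Group G] : ℝ :=
  ∑' k : ℕ, (1 - genProb G k)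

/-!
A tuple generates a finite group iff its image generates the quotient by the Frattini subgroup,
and the fibres of the quotient map all have the same size, so `P_G = P_{G/N}` whenever
`N ≤ Φ(G)`. In `G = C₂ × D₈` the central element `z = (1, r²) = (1, r)²` has order 2, hence lies
in every maximal subgroup, and `G/⟨z⟩ ≅ 𝔽₂³`. By duality (row rank = column rank), `k` vectors
span `𝔽_q^n` iff the `n` columns of the `k × n` matrix they form are linearly independent in
`𝔽_q^k`, which happens for `∏_{i<n} (q^k - q^i)` tuples. Thus
`1 - P_G(k) = 1 - (1 - 2^{-k})(1 - 2^{1-k})(1 - 2^{2-k}) = 7·2^{-k} - 14·4^{-k} + 8·8^{-k}`,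
and summing three geometric series gives `14 - 56/3 + 64/7 = 94/21`.
-/

open Module

theorem mem_frattini_of_mul_self_eq {G : Type*} [Group G] {w z : G}
    (hz : z ∈ Subgroup.center G) (hw : w * w = z) (hzz : z * z = 1) : z ∈ frattini G := by
  have hcomm (n : ℤ) (g : G) : g * z ^ n = z ^ n * g :=
    Subgroup.mem_center_iff.1 (Subgroup.zpow_mem _ hz n) g
  have : (Subgroup.zpowers z).Normal := ⟨by rintro _ ⟨n, rfl⟩ g; exact ⟨n, by simp [hcomm]⟩⟩
  refine Subgroup.mem_iInf.2 fun M => Subgroup.mem_iInf.2 fun hM => ?_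
  by_contra hzM
  have htop : M ⊔ Subgroup.zpowers z = ⊤ :=
    hM.2 _ (lt_of_le_of_ne le_sup_left fun h =>
      hzM (h ▸ Subgroup.mem_sup_right (Subgroup.mem_zpowers z)))
  obtain ⟨m, hm, _, ⟨n, rfl⟩, hmw⟩ :=
    Subgroup.mem_sup_of_normal_right.1 (htop ▸ Subgroup.mem_top w)
  have hzm : z = m * m :=
    calc z = m * z ^ n * (m * z ^ n) := by rw [hmw, hw]
      _ = m * m * (z ^ n * z ^ n) := by
        rw [mul_assoc, ← mul_assoc (z ^ n), ← hcomm, mul_assoc, mul_assoc]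
      _ = m * m := by rw [← (Commute.refl z).mul_zpow, hzz, one_zpow, mul_one]
  exact hzM (hzm ▸ M.mul_mem hm hm)

namespace MonoidHom

variable {G H : Type*} [Group G] [Group H] {f : G →* H}

theorem closure_eq_top_iff_of_ker_le_frattini [Finite G] (hf : Function.Surjective f)
    (hker : f.ker ≤ frattini G) (s : Set G) :
    Subgroup.closure s = ⊤ ↔ Subgroup.closure (f '' s) = ⊤ := by
  rw [← f.map_closure]
  refine ⟨fun h => by rw [h, ← range_eq_map, range_eq_top.2 hf], fun h => ?_⟩
  apply frattini_nongenerating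
  rw [eq_top_iff, ← Subgroup.comap_top f, ← h, Subgroup.comap_map_eq]
  exact sup_le_sup_left hker _

/-- The first component is `f`, definitionally. -/
noncomputable def equivProdKerOfSurjective (hf : Function.Surjective f) : G ≃ H × f.ker :=
  Subgroup.groupEquivQuotientProdSubgroup.trans
    ((QuotientGroup.quotientKerEquivOfSurjective f hf).toEquiv.prodCongr (Equiv.refl _))

theorem card_closure_range_eq_top_of_ker_le_frattini [Finite G] (hf : Function.Surjective f)
    (hker : f.ker ≤ frattini G) (k : ℕ) :
    Nat.card {v : Fin k → G // Subgroup.closure (Set.range v) = ⊤} =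
      Nat.card {u : Fin k → H // Subgroup.closure (Set.range u) = ⊤} * Nat.card f.ker ^ k := by
  let e : (Fin k → G) ≃ (Fin k → H) × (Fin k → f.ker) :=
    (Equiv.piCongrRight fun _ => equivProdKerOfSurjective hf).trans
      (Equiv.arrowProdEquivProdArrow _ _ _)
  have he (v : Fin k → G) : Subgroup.closure (Set.range v) = ⊤ ↔
      Subgroup.closure (Set.range (e v).1) = ⊤ := by
    have hv : (e v).1 = f ∘ v := rfl
    rw [closure_eq_top_iff_of_ker_le_frattini hf hker, ← Set.range_comp, hv]
  rw [Nat.card_congr (e.subtypeEquiv (q := fun p : (Fin k → H) × (Fin k → f.ker) =>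
      Subgroup.closure (Set.range p.1) = ⊤) he),
    Nat.card_congr (Equiv.prodSubtypeFstEquivSubtypeProd
      (p := fun u : Fin k → H => Subgroup.closure (Set.range u) = ⊤)),
    Nat.card_prod, Nat.card_fun, Nat.card_fin]

theorem genProb_eq_of_ker_le_frattini [Finite G] (hf : Function.Surjective f)
    (hker : f.ker ≤ frattini G) (k : ℕ) : genProb G k = genProb H k := by
  have hcard : Nat.card G = Nat.card H * Nat.card f.ker := by
    rw [Nat.card_congr (equivProdKerOfSurjective hf), Nat.card_prod]
  have hker_pos : (Nat.card f.ker : ℝ) ^ k ≠ 0 :=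
    pow_ne_zero _ (Nat.cast_ne_zero.2 Nat.card_pos.ne')
  rw [genProb, genProb, card_closure_range_eq_top_of_ker_le_frattini hf hker, hcard]
  push_cast
  rw [mul_pow, mul_div_mul_right _ _ hker_pos]

theorem egen_eq_of_ker_le_frattini [Finite G] (hf : Function.Surjective f)
    (hker : f.ker ≤ frattini G) : egen G = egen H := by
  simp only [egen, genProb_eq_of_ker_le_frattini hf hker]

end MonoidHom

theorem Matrix.span_row_eq_top_iff_linearIndependent_col {K : Type*} [Field K] {m n : ℕ}
    (A : Matrix (Fin m) (Fin n) K) :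
    Submodule.span K (Set.range A.row) = ⊤ ↔ LinearIndependent K A.col := by
  rw [Submodule.eq_top_iff_finrank_eq, ← rank_eq_finrank_span_row, rank_eq_finrank_span_cols,
    linearIndependent_iff_card_eq_finrank_span, Set.finrank, finrank_fin_fun, Fintype.card_fin,
    eq_comm]

theorem card_span_range_eq_top {K : Type*} [Field K] [Fintype K] (n k : ℕ) :
    Nat.card {v : Fin k → Fin n → K // Submodule.span K (Set.range v) = ⊤} =
      ∏ i : Fin n, (Fintype.card K ^ k - Fintype.card K ^ (i : ℕ)) := by
  rw [Nat.card_congr (Equiv.subtypeEquiv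
    (p := fun v : Fin k → Fin n → K => Submodule.span K (Set.range v) = ⊤)
    (q := fun s : Fin n → Fin k → K => LinearIndependent K s) (Equiv.piComm _)
    fun v => Matrix.span_row_eq_top_iff_linearIndependent_col (Matrix.of v))]
  rcases le_or_gt n k with hnk | hkn
  · rw [card_linearIndependent (by rwa [finrank_fin_fun])]
    simp
  · rw [Finset.prod_eq_zero (Finset.mem_univ (⟨k, hkn⟩ : Fin n)) (Nat.sub_self _),
      Nat.card_eq_zero]
    exact .inl ⟨fun s => hkn.not_ge (by simpa using s.2.fintype_card_le_finrank)⟩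

theorem Nat.cast_prod_pow_sub_pow {q : ℕ} (hq : 1 ≤ q) (n k : ℕ) :
    ((∏ i : Fin n, (q ^ k - q ^ (i : ℕ)) : ℕ) : ℝ) = ∏ i : Fin n, ((q : ℝ) ^ k - q ^ (i : ℕ)) := by
  rcases le_or_gt n k with hnk | hkn
  · push_cast [fun i : Fin n => Nat.pow_le_pow_right hq (i.2.le.trans hnk)]
    rfl
  · have hk : (⟨k, hkn⟩ : Fin n) ∈ Finset.univ := Finset.mem_univ _
    rw [Finset.prod_eq_zero hk (Nat.sub_self _), Finset.prod_eq_zero hk (sub_self _),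
      Nat.cast_zero]

theorem Subgroup.closure_eq_top_iff_span_zmod_eq_top {p : ℕ} {M : Type*} [AddCommGroup M]
    [Module (ZMod p) M] (s : Set (Multiplicative M)) :
    Subgroup.closure s = ⊤ ↔ Submodule.span (ZMod p) (Multiplicative.ofAdd ⁻¹' s) = ⊤ := by
  rw [← Submodule.restrictScalars_eq_top_iff ℤ,
    Submodule.restrictScalars_span ℤ (ZMod p) ZMod.intCast_surjective,
    ← Submodule.toAddSubgroup_eq_top, Submodule.span_int_eq_addSubgroupClosure,
    ← Subgroup.toAddSubgroup'_closure]
  exact (map_eq_top_iff Subgroup.toAddSubgroup').symm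

theorem genProb_multiplicative_zmod_pi (p : ℕ) [Fact p.Prime] (n k : ℕ) :
    genProb (Multiplicative (Fin n → ZMod p)) k =
      ∏ i : Fin n, (1 - (p : ℝ) ^ (i : ℕ) / p ^ k) := by
  have hcount : Nat.card {v : Fin k → Multiplicative (Fin n → ZMod p) //
      Subgroup.closure (Set.range v) = ⊤} =
      Nat.card {u : Fin k → Fin n → ZMod p // Submodule.span (ZMod p) (Set.range u) = ⊤} :=
    Nat.card_congr <| Equiv.subtypeEquiv
      (q := fun u : Fin k → Fin n → ZMod p => Submodule.span (ZMod p) (Set.range u) = ⊤)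
      (Equiv.arrowCongr (Equiv.refl _) Multiplicative.toAdd) fun v => by
        rw [Subgroup.closure_eq_top_iff_span_zmod_eq_top (p := p)]
        rfl
  have hp : (p : ℝ) ^ k ≠ 0 := pow_ne_zero _ (Nat.cast_ne_zero.2 (Fact.out : p.Prime).ne_zero)
  have hcard : (Nat.card (Multiplicative (Fin n → ZMod p)) : ℝ) ^ k =
      ∏ _i : Fin n, (p : ℝ) ^ k := by
    simp [Nat.card_eq_fintype_card, ← pow_mul, mul_comm]
  rw [genProb, hcount, card_span_range_eq_top, ZMod.card,
    Nat.cast_prod_pow_sub_pow (Fact.out : p.Prime).one_le, hcard, ← Finset.prod_div_distrib]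
  simp_rw [sub_div, div_self hp]

theorem one_sub_genProb_multiplicative_fin_three_zmod_two (k : ℕ) :
    1 - genProb (Multiplicative (Fin 3 → ZMod 2)) k =
      7 * (2⁻¹ : ℝ) ^ k - 14 * (4⁻¹ : ℝ) ^ k + 8 * (8⁻¹ : ℝ) ^ k := by
  have h4 : (4⁻¹ : ℝ) ^ k = ((2⁻¹ : ℝ) ^ k) ^ 2 := by
    rw [← pow_mul, mul_comm, pow_mul]; norm_num
  have h8 : (8⁻¹ : ℝ) ^ k = ((2⁻¹ : ℝ) ^ k) ^ 3 := by
    rw [← pow_mul, mul_comm, pow_mul]; norm_num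
  rw [genProb_multiplicative_zmod_pi, Fin.prod_univ_three, h4, h8]
  simp only [Fin.val_zero, Fin.val_one, Fin.val_two, div_eq_mul_inv, ← inv_pow]
  push_cast
  ring

theorem egen_multiplicative_fin_three_zmod_two :
    egen (Multiplicative (Fin 3 → ZMod 2)) = 94 / 21 := by
  have geom (r : ℝ) (hr : r ∈ Set.Ioo 0 1) : HasSum (fun k : ℕ => r ^ k) (1 - r)⁻¹ :=
    hasSum_geometric_of_lt_one hr.1.le hr.2
  have hsum := (((geom 2⁻¹ (by norm_num)).mul_left 7).sub
    ((geom 4⁻¹ (by norm_num)).mul_left 14)).add ((geom 8⁻¹ (by norm_num)).mul_left 8)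
  rw [egen, tsum_congr one_sub_genProb_multiplicative_fin_three_zmod_two, hsum.tsum_eq]
  norm_num

def c2ProdD8ToCube :
    Multiplicative (ZMod 2) × DihedralGroup 4 →* Multiplicative (Fin 3 → ZMod 2) :=
  MonoidHom.mk' (fun g => Multiplicative.ofAdd ![g.1.toAdd,
      match g.2 with | .r i => (i.cast : ZMod 2) | .sr i => i.cast,
      match g.2 with | .r _ => 0 | .sr _ => 1]) (by decide)

theorem c2ProdD8ToCube_surjective : Function.Surjective c2ProdD8ToCube := by decide

theorem c2ProdD8ToCube_ker_le_frattini :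
    c2ProdD8ToCube.ker ≤ frattini (Multiplicative (ZMod 2) × DihedralGroup 4) := by
  have hz : ((1, .r 2) : Multiplicative (ZMod 2) × DihedralGroup 4) ∈ frattini _ :=
    mem_frattini_of_mul_self_eq (w := (1, .r 1)) (Subgroup.mem_center_iff.2 (by decide))
      (by decide) (by decide)
  have hker : ∀ g, c2ProdD8ToCube g = 1 → g = 1 ∨ g = (1, .r 2) := by decide
  intro g hg
  rcases hker g hg with rfl | rfl
  exacts [Subgroup.one_mem _, hz]

/-- `e((ℤ/2ℤ) × D₈) = 94/21`. -/
theorem egen_c2_times_dihedral_eight :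
    egen (Multiplicative (ZMod 2) × DihedralGroup 4) = 94 / 21 := by
  rw [MonoidHom.egen_eq_of_ker_le_frattini c2ProdD8ToCube_surjective
    c2ProdD8ToCube_ker_le_frattini, egen_multiplicative_fin_three_zmod_two]
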